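/- arXiv:2203.03424 — 5 statements merged into one kernel-verified Lean document; each statement's English description precedes it below -/
import Mathlib

section
/- Let $a, b \in \mathbb{C}$ and set $c = (a-b)(1+ab)$, $d = (a+b)(1-ab)$. Consider the symmetric matrix $M(w_0, w_1, w_2, w_3) = \begin{pmatrix} cw_0-(a-b)w_3 & -bw_1-aw_2 & (b^2-a^2)w_0 & w_1-w_2 \\ -bw_1-aw_2 & dw_0+(a+b)w_3 & w_1+w_2 & (a^2-b^2)w_0 \\ (b^2-a^2)w_0 & w_1+w_2 & cw_0+(a-b)w_3 & -bw_1+aw_2 \\ w_1-w_2 & (a^2-b^2)w_0 & -bw_1+aw_2 & dw_0-(a+b)w_3 \end{pmatrix}$. Then the restriction of $\det M$ to the plane $w_0 = 0$ equals $\big((b^2-1)w_1^2 - (a^2-1)w_2^2 + (a^2-b^2)w_3^2\big)^2 - 4(1-a^2)(a^2-b^2)w_2^2 w_3^2$, i.e. it factors as the product of the two conics $(b^2-1)w_1^2 - (a^2-1)w_2^2 + (a^2-b^2)w_3^2 \mp 2\sqrt{(1-a^2)(a^2-b^2)}\, w_2 w_3$. -/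
/-!
On the plane `w₀ = 0` the entries `M₀₂` and `M₁₃` vanish, so the support of `M` is a
4-cycle and only the permutations along that cycle contribute to `det M`. Substituting the
entries into the resulting cycle formula gives the difference of squares, which factors as
soon as `(1 - a²)(a² - b²)` has a square root `r`.
-/

theorem Matrix.det_fin_four_symmetric_cycle {R : Type*} [CommRing R] (p q r s x y z u : R) :
    !![p, x, 0, y; x, q, z, 0; 0, z, r, u; y, 0, u, s].det =
      p * q * r * s - r * s * x ^ 2 - p * s * z ^ 2 - p * q * u ^ 2 - q * r * y ^ 2
        + x ^ 2 * u ^ 2 + y ^ 2 * z ^ 2 - 2 * x * y * z * u := by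
  simp [Matrix.det_succ_row_zero, Fin.sum_univ_succ, Fin.succAbove]
  ring

/-- the restriction to `w₀ = 0` of the determinant of the symmetroid matrix
`M` equals `((b²-1)w₁² - (a²-1)w₂² + (a²-b²)w₃²)² - 4(1-a²)(a²-b²)w₂²w₃²`, i.e. it factors
as the product of two conics. -/
theorem stmt8 (a b w1 w2 w3 : ℂ) :
    let c := (a - b) * (1 + a * b)
    let d := (a + b) * (1 - a * b)
    let M : Matrix (Fin 4) (Fin 4) ℂ := fun i j =>
      (!![c * 0 - (a - b) * w3, -b * w1 - a * w2, (b ^ 2 - a ^ 2) * 0, w1 - w2;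
          -b * w1 - a * w2, d * 0 + (a + b) * w3, w1 + w2, (a ^ 2 - b ^ 2) * 0;
          (b ^ 2 - a ^ 2) * 0, w1 + w2, c * 0 + (a - b) * w3, -b * w1 + a * w2;
          w1 - w2, (a ^ 2 - b ^ 2) * 0, -b * w1 + a * w2, d * 0 - (a + b) * w3]) i j
    M.det =
      ((b ^ 2 - 1) * w1 ^ 2 - (a ^ 2 - 1) * w2 ^ 2 + (a ^ 2 - b ^ 2) * w3 ^ 2) ^ 2
        - 4 * (1 - a ^ 2) * (a ^ 2 - b ^ 2) * w2 ^ 2 * w3 ^ 2 ∧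
    ∀ r : ℂ, r ^ 2 = (1 - a ^ 2) * (a ^ 2 - b ^ 2) →
      M.det =
        ((b ^ 2 - 1) * w1 ^ 2 - (a ^ 2 - 1) * w2 ^ 2 + (a ^ 2 - b ^ 2) * w3 ^ 2
            - 2 * r * w2 * w3) *
        ((b ^ 2 - 1) * w1 ^ 2 - (a ^ 2 - 1) * w2 ^ 2 + (a ^ 2 - b ^ 2) * w3 ^ 2
            + 2 * r * w2 * w3) := by
  intro c d M
  have hM : M = !![-(a - b) * w3, -b * w1 - a * w2, 0, w1 - w2;
      -b * w1 - a * w2, (a + b) * w3, w1 + w2, 0;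
      0, w1 + w2, (a - b) * w3, -b * w1 + a * w2;
      w1 - w2, 0, -b * w1 + a * w2, -(a + b) * w3] := by
    simp only [M, mul_zero, zero_sub, zero_add, neg_mul]
    rfl
  have hdet : M.det = ((b ^ 2 - 1) * w1 ^ 2 - (a ^ 2 - 1) * w2 ^ 2 + (a ^ 2 - b ^ 2) * w3 ^ 2) ^ 2
      - 4 * (1 - a ^ 2) * (a ^ 2 - b ^ 2) * w2 ^ 2 * w3 ^ 2 := by
    rw [hM, Matrix.det_fin_four_symmetric_cycle]
    ring
  refine ⟨hdet, fun r hr => ?_⟩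
  rw [hdet]
  linear_combination 4 * w2 ^ 2 * w3 ^ 2 * hr
end

section
/- Let $a, b \in \mathbb{C}$ and let $w_1, w_2 \in \mathbb{C}$ satisfy $(b^2-1)w_1^2 = (a^2-1)w_2^2$. Then the symmetric matrix $\begin{pmatrix} 0 & -bw_1-aw_2 & 0 & w_1-w_2 \\ -bw_1-aw_2 & 0 & w_1+w_2 & 0 \\ 0 & w_1+w_2 & 0 & -bw_1+aw_2 \\ w_1-w_2 & 0 & -bw_1+aw_2 & 0 \end{pmatrix}$ has rank at most 2. -/
lemma rank_le_two_of_factor (M : Matrix (Fin 4) (Fin 4) ℂ)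
    (P : Matrix (Fin 4) (Fin 2) ℂ) (Q : Matrix (Fin 2) (Fin 4) ℂ)
    (h : M = P * Q) : M.rank ≤ 2 := by
  rw [h]
  exact (Matrix.rank_mul_le_right P Q).trans (by simpa using Matrix.rank_le_card_height Q)

lemma aux_rank (p q r s : ℂ) (h : p * s = q * r) :
    (!![(0 : ℂ), p, 0, q; p, 0, r, 0; 0, r, 0, s; q, 0, s, 0]).rank ≤ 2 := by
  by_cases hp : p ≠ 0
  · apply rank_le_two_of_factor _ !![1,0; 0,1; r/p,0; 0,q/p] !![0,p,0,q; p,0,r,0]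
    ext i j
    fin_cases i <;> fin_cases j <;>
      simp [Matrix.mul_apply, Fin.sum_univ_two] <;> field_simp <;> (first | linear_combination h | linear_combination -h)
  by_cases hq : q ≠ 0
  · apply rank_le_two_of_factor _ !![1,0; 0,p/q; s/q,0; 0,1] !![0,p,0,q; q,0,s,0]
    ext i j
    fin_cases i <;> fin_cases j <;>
      simp [Matrix.mul_apply, Fin.sum_univ_two] <;> field_simp <;> (first | linear_combination h | linear_combination -h)
  by_cases hr : r ≠ 0
  · apply rank_le_two_of_factor _ !![p/r,0; 0,1; 1,0; 0,s/r] !![0,r,0,s; p,0,r,0]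
    ext i j
    fin_cases i <;> fin_cases j <;>
      simp [Matrix.mul_apply, Fin.sum_univ_two] <;> field_simp <;> (first | linear_combination h | linear_combination -h)
  by_cases hs : s ≠ 0
  · apply rank_le_two_of_factor _ !![q/s,0; 0,r/s; 1,0; 0,1] !![0,r,0,s; q,0,s,0]
    ext i j
    fin_cases i <;> fin_cases j <;>
      simp [Matrix.mul_apply, Fin.sum_univ_two] <;> field_simp <;> (first | linear_combination h | linear_combination -h)
  · push_neg at hp hq hr hs
    subst hp hq hr hs
    apply rank_le_two_of_factor _ 0 0
    ext i j
    fin_cases i <;> fin_cases j <;> simp [Matrix.vecHead, Matrix.vecTail]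

/-- if `(b²-1)w₁² = (a²-1)w₂²` then the matrix `M(0,w₁,w₂,0)` of the
symmetroid has rank at most 2. -/
theorem stmt9 (a b w1 w2 : ℂ) (h : (b ^ 2 - 1) * w1 ^ 2 = (a ^ 2 - 1) * w2 ^ 2) :
    (!![(0 : ℂ), -b * w1 - a * w2, 0, w1 - w2;
        -b * w1 - a * w2, 0, w1 + w2, 0;
        0, w1 + w2, 0, -b * w1 + a * w2;
        w1 - w2, 0, -b * w1 + a * w2, 0]).rank ≤ 2 := by
  exact aux_rank (-b * w1 - a * w2) (w1 - w2) (w1 + w2) (-b * w1 + a * w2)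
    (by linear_combination h)
end

section
/- Let $a_1, a_2, a_3, b_1, b_2, b_3 \in \mathbb{C}$ be nonzero. The system of equations $\xi_i^2 = a_i \sigma$, $\eta_i^2 = b_i \sigma$ for $i = 1, 2, 3$, where $\sigma = \xi_1\eta_1 + \xi_2\eta_2 + \xi_3\eta_3$, has a solution $(\xi, \eta) \in \mathbb{C}^6$ with $\sigma \ne 0$ if and only if there exist choices of square roots such that $\sqrt{a_1 b_1} + \sqrt{a_2 b_2} + \sqrt{a_3 b_3} = 1$, i.e. if and only if $\prod_{\epsilon_2, \epsilon_3 \in \{\pm 1\}} \big( \sqrt{a_1 b_1} + \epsilon_2 \sqrt{a_2 b_2} + \epsilon_3 \sqrt{a_3 b_3} - 1 \big) = 0$ for some fixed choices of $\sqrt{a_i b_i}$. -/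
/-!
With `σ = Σ ξᵢηᵢ ≠ 0`, the numbers `rᵢ = ξᵢηᵢ / σ` satisfy `rᵢ² = aᵢbᵢ` and sum
to `1`. Conversely, over an algebraically closed field every square root `rᵢ` of `aᵢbᵢ`
factors as `rᵢ = ξᵢηᵢ` with `ξᵢ² = aᵢ` and `ηᵢ² = bᵢ`; then
`σ = Σ rᵢ = 1` and the equations hold.
-/

open Finset

variable {K ι : Type*} [Field K]

theorem exists_sq_eq_sq_eq_mul_eq_of_sq_eq_mul [IsAlgClosed K] {a b r : K} (h : r ^ 2 = a * b) :
    ∃ x y : K, x ^ 2 = a ∧ y ^ 2 = b ∧ x * y = r := by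
  obtain ⟨x, hx⟩ := IsAlgClosed.exists_pow_nat_eq a two_pos
  by_cases hx0 : x = 0
  · obtain ⟨y, hy⟩ := IsAlgClosed.exists_pow_nat_eq b two_pos
    have hr : r = 0 := by
      rw [← hx, hx0] at h
      simpa using h
    exact ⟨x, y, hx, hy, by rw [hx0, hr, zero_mul]⟩
  · refine ⟨x, r / x, hx, ?_, mul_div_cancel₀ r hx0⟩
    rw [div_pow, h, ← hx]
    field_simp

theorem div_sq_eq_mul_of_sq_eq_mul {x y σ a b : K} (hσ : σ ≠ 0) (hx : x ^ 2 = a * σ)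
    (hy : y ^ 2 = b * σ) : (x * y / σ) ^ 2 = a * b := by
  rw [div_pow, mul_pow, hx, hy]
  field_simp

variable [Fintype ι]

theorem exists_sq_eq_mul_sum_ne_zero_iff [IsAlgClosed K] (a b : ι → K) :
    (∃ ξ η : ι → K,
        (∀ i, ξ i ^ 2 = a i * (∑ j, ξ j * η j) ∧ η i ^ 2 = b i * (∑ j, ξ j * η j)) ∧
        (∑ j, ξ j * η j) ≠ 0) ↔
    ∃ r : ι → K, (∀ i, r i ^ 2 = a i * b i) ∧ ∑ i, r i = 1 := by
  constructor
  · rintro ⟨ξ, η, h, hσ⟩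
    refine ⟨fun i => ξ i * η i / ∑ j, ξ j * η j,
      fun i => div_sq_eq_mul_of_sq_eq_mul hσ (h i).1 (h i).2, ?_⟩
    rw [← sum_div, div_self hσ]
  · rintro ⟨r, hr, hsum⟩
    choose ξ η hξ hη hξη using fun i => exists_sq_eq_sq_eq_mul_eq_of_sq_eq_mul (hr i)
    have hσ : ∑ j, ξ j * η j = 1 := by simp only [hξη, hsum]
    refine ⟨ξ, η, fun i => ?_, by rw [hσ]; exact one_ne_zero⟩
    rw [hσ, mul_one, mul_one]
    exact ⟨hξ i, hη i⟩

theorem stmt11_general (A B : Fin 3 → ℂ) :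
    (∃ ξ η : Fin 3 → ℂ,
        (∀ i, ξ i ^ 2 = A i * (∑ j, ξ j * η j) ∧ η i ^ 2 = B i * (∑ j, ξ j * η j)) ∧
        (∑ j, ξ j * η j) ≠ 0) ↔
    (∃ r : Fin 3 → ℂ, (∀ i, r i ^ 2 = A i * B i) ∧ r 0 + r 1 + r 2 = 1) := by
  simpa only [Fin.sum_univ_three] using exists_sq_eq_mul_sum_ne_zero_iff A B

/-- the system `ξᵢ² = aᵢσ`, `ηᵢ² = bᵢσ` with `σ = Σ ξᵢηᵢ` has a solution
with `σ ≠ 0` iff for some choices of square roots `√(aᵢbᵢ)` one has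
`√(a₁b₁) + √(a₂b₂) + √(a₃b₃) = 1`. -/
theorem stmt11 (A B : Fin 3 → ℂ) (hA : ∀ i, A i ≠ 0) (hB : ∀ i, B i ≠ 0) :
    (∃ ξ η : Fin 3 → ℂ,
        (∀ i, ξ i ^ 2 = A i * (∑ j, ξ j * η j) ∧ η i ^ 2 = B i * (∑ j, ξ j * η j)) ∧
        (∑ j, ξ j * η j) ≠ 0) ↔
    (∃ r : Fin 3 → ℂ, (∀ i, r i ^ 2 = A i * B i) ∧ r 0 + r 1 + r 2 = 1) :=
  stmt11_general A B
end

section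
/- Let $a_1, a_2, a_3, b_1, b_2, b_3 \in \mathbb{C}$ satisfy: for all choices of signs $\epsilon_i \in \{\pm 1\}$ and square roots, $\epsilon_1\sqrt{a_1 b_1} + \epsilon_2\sqrt{a_2 b_2} + \epsilon_3\sqrt{a_3 b_3} \ne 1$. Then the only solution $(\xi, \eta) \in \mathbb{C}^6$ of the system $\xi_i^2 = a_i \sigma$, $\eta_i^2 = b_i \sigma$ ($i = 1,2,3$), where $\sigma = \xi_1\eta_1 + \xi_2\eta_2 + \xi_3\eta_3$, is $\xi = \eta = 0$. -/
/-- if for every choice of square roots `√(aᵢbᵢ)` (including all signs)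
the sum `√(a₁b₁)+√(a₂b₂)+√(a₃b₃)` never equals 1, then the system `ξᵢ² = aᵢσ`,
`ηᵢ² = bᵢσ`, `σ = Σ ξᵢηᵢ` has only the trivial solution `ξ = η = 0`. -/
theorem stmt12 (A B : Fin 3 → ℂ)
    (h : ∀ r : Fin 3 → ℂ, (∀ i, r i ^ 2 = A i * B i) → r 0 + r 1 + r 2 ≠ 1)
    (ξ η : Fin 3 → ℂ)
    (hsys : ∀ i, ξ i ^ 2 = A i * (∑ j, ξ j * η j) ∧
      η i ^ 2 = B i * (∑ j, ξ j * η j)) :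
    ξ = 0 ∧ η = 0 := by
  set σ : ℂ := ∑ j, ξ j * η j with hσ
  have hσ0 : σ = 0 := by
    by_contra hne
    apply h (fun i => ξ i * η i / σ)
    · intro i
      have h1 := (hsys i).1
      have h2 := (hsys i).2
      field_simp
      linear_combination η i ^ 2 * h1 + A i * σ * h2
    · have : ξ 0 * η 0 + ξ 1 * η 1 + ξ 2 * η 2 = σ := by
        rw [hσ, Fin.sum_univ_three]
      field_simp
      linear_combination this
  have hx : ∀ i, ξ i = 0 := fun i => by
    have := (hsys i).1; rw [hσ0, mul_zero, pow_eq_zero_iff] at this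
    · exact this
    · norm_num
  have hy : ∀ i, η i = 0 := fun i => by
    have := (hsys i).2; rw [hσ0, mul_zero, pow_eq_zero_iff] at this
    · exact this
    · norm_num
  exact ⟨funext hx, funext hy⟩
end

section
/- Consider the $6\times 6$ symmetric matrix $\mathcal{M}$ over the commutative ring $R = \mathbb{C}[b_{11}, b_{12}, b_{22}, b_{33}, b_{34}, b_{44}, Q]$ given (in the ordering of the paper's formula (13)) with entries: rows/columns 1,2,4,5 containing the products $b_{ij}b_{kl}$ and $Q \mp b_{12}b_{34}$ as in the paper, and rows/columns 3,6 equal to $\mathrm{diag\text{-}block}\begin{pmatrix} Q_1 & Q \\ Q & Q_2 \end{pmatrix}$ where $Q_1 = b_{11}b_{22} - b_{12}^2$ and $Q_2 = b_{33}b_{44} - b_{34}^2$. Then $Q_1 Q_2 - Q^2$ divides $\det \mathcal{M}$ in $R$. -/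
open MvPolynomial

/-!
Up to the permutation of rows and columns that moves indices 3 and 6 (`2` and `5` in `Fin 6`)
to the front, the matrix is block diagonal, and the `2 × 2` block is `!![Q₁, Q; Q, Q₂]`, whose determinant is
`Q₁ Q₂ - Q²`. Only the vanishing of the entries of columns 3 and 6 outside rows 3 and 6 is
needed: the matrix is then block triangular.
-/

namespace Matrix

variable {n R : Type*} [Fintype n] [DecidableEq n] [CommRing R]

noncomputable def finTwoEquivPair {a b : n} (hab : a ≠ b) : Fin 2 ≃ {i // i = a ∨ i = b} :=
  Equiv.ofBijective ![⟨a, .inl rfl⟩, ⟨b, .inr rfl⟩] <| by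
    refine ⟨fun k l hkl => ?_, fun ⟨i, hi⟩ => ?_⟩
    · fin_cases k <;> fin_cases l <;> simp_all [Subtype.ext_iff, eq_comm]
    · rcases hi with rfl | rfl
      exacts [⟨0, rfl⟩, ⟨1, rfl⟩]

theorem det_toSquareBlockProp_pair {a b : n} (hab : a ≠ b) (M : Matrix n n R) :
    (M.toSquareBlockProp fun i => i = a ∨ i = b).det = M a a * M b b - M a b * M b a := by
  rw [← det_submatrix_equiv_self (finTwoEquivPair hab), det_fin_two]
  rfl

theorem det_pair_dvd_det {a b : n} (hab : a ≠ b) (M : Matrix n n R)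
    (hcol : ∀ i, i ≠ a → i ≠ b → M i a = 0 ∧ M i b = 0) :
    M a a * M b b - M a b * M b a ∣ M.det := by
  rw [M.twoBlockTriangular_det (fun i => i = a ∨ i = b), det_toSquareBlockProp_pair hab]
  · exact dvd_mul_right _ _
  · rintro i hi j (rfl | rfl)
    exacts [(hcol i (by tauto) (by tauto)).1, (hcol i (by tauto) (by tauto)).2]

end Matrix

/-- the quadratic `Q₁Q₂ - Q²` divides the determinant of the 6×6 symmetric
matrix (13) of the paper, over `ℂ[b₁₁,b₁₂,b₂₂,b₃₃,b₃₄,b₄₄,Q]`. -/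
theorem stmt13 :
    let R := MvPolynomial (Fin 7) ℂ
    let b11 : R := X 0; let b12 : R := X 1; let b22 : R := X 2
    let b33 : R := X 3; let b34 : R := X 4; let b44 : R := X 5
    let q : R := X 6
    let Q1 : R := b11 * b22 - b12 ^ 2
    let Q2 : R := b33 * b44 - b34 ^ 2
    let M : Matrix (Fin 6) (Fin 6) R :=
      !![b22 * b33, -(b12 * b33), 0, q - b12 * b34, -(b22 * b34), 0;
         -(b12 * b33), b11 * b33, 0, b11 * b34, q + b12 * b34, 0;
         0, 0, Q1, 0, 0, q;
         q - b12 * b34, b11 * b34, 0, b11 * b44, b12 * b44, 0;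
         -(b22 * b34), q + b12 * b34, 0, b12 * b44, b22 * b44, 0;
         0, 0, q, 0, 0, Q2]
    (Q1 * Q2 - q ^ 2) ∣ M.det := by
  intro R b11 b12 b22 b33 b34 b44 q Q1 Q2 M
  have hdet : M 2 2 * M 5 5 - M 2 5 * M 5 2 = Q1 * Q2 - q ^ 2 := by
    simp only [M, Matrix.of_apply, Matrix.cons_val]
    ring
  rw [← hdet]
  refine M.det_pair_dvd_det (by decide) fun i hi2 hi5 => ?_
  fin_cases i <;> simp_all [M]
end
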